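/- arXiv:math/0702628 — 7 statements merged into one kernel-verified Lean document; each statement's English description precedes it below -/
import Mathlib

section
/- Let n ≥ 1 and let k, d₁, d₂ be natural numbers with d₂ < k. Let A and B be finite sets of exponent vectors in Fin n → ℕ such that every element of A has total degree d₁ and every element of B has total degree d₂. Let U = { γ : Fin n → ℕ | ∃ α ∈ A, ∃ β ∈ B, k·α + β ≤ γ componentwise } be the upward closure of the set C = { k·α + β : α ∈ A, β ∈ B }. Then the set of minimal elements of U with respect to the componentwise order is exactly C, and C has cardinality |A|·|B|. -/
lemma conjoined_aux_eq_of_le {n : ℕ} {x y : Fin n → ℕ} (h : x ≤ y)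
    (hs : ∑ i, y i ≤ ∑ i, x i) : x = y := by
  funext i
  by_contra hne
  have hlt : x i < y i := lt_of_le_of_ne (h i) hne
  have := Finset.sum_lt_sum (fun j _ => h j) ⟨i, Finset.mem_univ i, hlt⟩
  omega

/-- Combinatorial content of condition (i) in the conjoined-pairs lemma: the
minimal elements (for the componentwise order) of the upward closure of
`C = {k • α + β : α ∈ A, β ∈ B}` are exactly the elements of `C`, and `C` has
cardinality `|A| * |B|`. -/
theorem conjoined_min_generators (n : ℕ) (hn : 1 ≤ n) (k d₁ d₂ : ℕ) (hd : d₂ < k)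
    (A B : Finset (Fin n → ℕ))
    (hA : ∀ α ∈ A, ∑ i, α i = d₁) (hB : ∀ β ∈ B, ∑ i, β i = d₂) :
    ({γ : Fin n → ℕ | (∃ α ∈ A, ∃ β ∈ B, k • α + β ≤ γ) ∧
        ∀ γ' : Fin n → ℕ, (∃ α ∈ A, ∃ β ∈ B, k • α + β ≤ γ') → γ' ≤ γ → γ' = γ}
      = {γ : Fin n → ℕ | ∃ α ∈ A, ∃ β ∈ B, γ = k • α + β}) ∧
    ({γ : Fin n → ℕ | ∃ α ∈ A, ∃ β ∈ B, γ = k • α + β}).ncard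
      = A.card * B.card := by
  have hk : 0 < k := Nat.lt_of_le_of_lt (Nat.zero_le _) hd
  have hsum : ∀ α ∈ A, ∀ β ∈ B, ∑ i, (k • α + β) i = k * d₁ + d₂ := by
    intro α hα β hβ
    simp only [Pi.add_apply, Pi.smul_apply, smul_eq_mul, Finset.sum_add_distrib,
      ← Finset.mul_sum, hA α hα, hB β hβ]
  constructor
  · ext γ
    simp only [Set.mem_setOf_eq]
    constructor
    · rintro ⟨⟨α, hα, β, hβ, hle⟩, hmin⟩
      exact ⟨α, hα, β, hβ, (hmin _ ⟨α, hα, β, hβ, le_refl _⟩ hle).symm⟩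
    · rintro ⟨α, hα, β, hβ, rfl⟩
      refine ⟨⟨α, hα, β, hβ, le_refl _⟩, ?_⟩
      rintro γ' ⟨α', hα', β', hβ', hle'⟩ hle
      refine conjoined_aux_eq_of_le hle ?_
      calc ∑ i, (k • α + β) i = k * d₁ + d₂ := hsum α hα β hβ
        _ = ∑ i, (k • α' + β') i := (hsum α' hα' β' hβ').symm
        _ ≤ ∑ i, γ' i := Finset.sum_le_sum (fun j _ => hle' j)
  · have hset : {γ : Fin n → ℕ | ∃ α ∈ A, ∃ β ∈ B, γ = k • α + β}
        = ↑((A ×ˢ B).image (fun p => k • p.1 + p.2)) := by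
      ext γ
      simp only [Set.mem_setOf_eq, Finset.coe_image, Set.mem_image, Finset.mem_coe,
        Finset.mem_product]
      constructor
      · rintro ⟨α, hα, β, hβ, rfl⟩; exact ⟨(α, β), ⟨hα, hβ⟩, rfl⟩
      · rintro ⟨⟨α, β⟩, ⟨hα, hβ⟩, rfl⟩; exact ⟨α, hα, β, hβ, rfl⟩
    rw [hset, Set.ncard_coe_finset, Finset.card_image_of_injOn, Finset.card_product]
    rintro ⟨α, β⟩ hp ⟨α', β'⟩ hq heq
    simp only [Finset.mem_coe, Finset.mem_product] at hp hq
    have hβlt : ∀ i, β i < k := fun i =>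
      lt_of_le_of_lt (le_of_le_of_eq (Finset.single_le_sum
        (fun j _ => Nat.zero_le (β j)) (Finset.mem_univ i)) (hB β hp.2)) hd
    have hβ'lt : ∀ i, β' i < k := fun i =>
      lt_of_le_of_lt (le_of_le_of_eq (Finset.single_le_sum
        (fun j _ => Nat.zero_le (β' j)) (Finset.mem_univ i)) (hB β' hq.2)) hd
    have key : ∀ i, k * α i + β i = k * α' i + β' i := fun i => by
      have := congrFun heq i
      simpa [Pi.add_apply, Pi.smul_apply, smul_eq_mul] using this
    have hα : ∀ i, α i = α' i := fun i => by
      have h1 : (k * α i + β i) / k = α i := by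
        rw [Nat.mul_add_div hk, Nat.div_eq_of_lt (hβlt i)]; ring
      have h2 : (k * α' i + β' i) / k = α' i := by
        rw [Nat.mul_add_div hk, Nat.div_eq_of_lt (hβ'lt i)]; ring
      rw [← h1, key i, h2]
    have hβeq : ∀ i, β i = β' i := fun i => by
      have h := key i; rw [hα i] at h; omega
    exact Prod.ext (funext hα) (funext hβeq)
end

section
/- Let K be a field, n ≥ 1, and let k, d₁, d₂ be natural numbers with d₂ < k. Let A and B be finite sets of exponent vectors in Fin n → ℕ with every element of A of total degree d₁ and every element of B of total degree d₂. In R = MvPolynomial (Fin n) K, let J be the ideal generated by the monomials { X^β : β ∈ B } and let I^{[k]} be the ideal generated by { X^{k·α} : α ∈ A }. Then the product ideal I^{[k]}·J is generated by the set of monomials M = { X^{k·α + β} : α ∈ A, β ∈ B }, M has exactly |A|·|B| elements, and no monomial of M lies in the ideal generated by the remaining monomials of M. -/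
open MvPolynomial

lemma exp_inj {n k d₂ : ℕ} (hd : d₂ < k) {α β α' β' : Fin n →₀ ℕ}
    (hb : ∑ i, β i = d₂) (hb' : ∑ i, β' i = d₂)
    (h : k • α + β = k • α' + β') : α = α' ∧ β = β' := by
  have hk : 0 < k := lt_of_le_of_lt (Nat.zero_le _) hd
  have hβ : ∀ i, β i < k := fun i =>
    lt_of_le_of_lt (hb ▸ Finset.single_le_sum (fun j _ => Nat.zero_le _) (Finset.mem_univ i)) hd
  have hβ' : ∀ i, β' i < k := fun i =>
    lt_of_le_of_lt (hb' ▸ Finset.single_le_sum (fun j _ => Nat.zero_le _) (Finset.mem_univ i)) hd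
  have hpt : ∀ i, k * α i + β i = k * α' i + β' i := fun i => by
    have := DFunLike.congr_fun h i
    simpa [Finsupp.smul_apply, smul_eq_mul] using this
  have hαi : ∀ i, α i = α' i := fun i => by
    have h1 : (k * α i + β i) / k = (k * α' i + β' i) / k := by rw [hpt i]
    rwa [Nat.mul_add_div hk, Nat.mul_add_div hk, Nat.div_eq_of_lt (hβ i),
      Nat.div_eq_of_lt (hβ' i), Nat.add_zero, Nat.add_zero] at h1
  constructor <;> ext i
  · exact hαi i
  · have := hpt i; rw [hαi i] at this; omega

/-- Ideal-theoretic form of condition (i) in the conjoined-pairs lemma: the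
product ideal `I^{[k]} * J` is generated by the monomials `X^(k•α+β)` with
`α ∈ A`, `β ∈ B`; there are exactly `|A| * |B|` such monomials, and none of
them lies in the ideal generated by the others. -/
theorem conjoined_product_ideal (K : Type*) [Field K] (n : ℕ) (hn : 1 ≤ n)
    (k d₁ d₂ : ℕ) (hd : d₂ < k) (A B : Finset (Fin n →₀ ℕ))
    (hA : ∀ α ∈ A, ∑ i, α i = d₁) (hB : ∀ β ∈ B, ∑ i, β i = d₂) :
    (Ideal.span ((fun α => (monomial (k • α) (1 : K))) '' (A : Set (Fin n →₀ ℕ))) *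
        Ideal.span ((fun β => (monomial β (1 : K))) '' (B : Set (Fin n →₀ ℕ)))
      = Ideal.span
          {m : MvPolynomial (Fin n) K |
            ∃ α ∈ A, ∃ β ∈ B, m = monomial (k • α + β) (1 : K)}) ∧
    ({m : MvPolynomial (Fin n) K |
        ∃ α ∈ A, ∃ β ∈ B, m = monomial (k • α + β) (1 : K)}).ncard
      = A.card * B.card ∧
    ∀ m ∈ {m : MvPolynomial (Fin n) K |
        ∃ α ∈ A, ∃ β ∈ B, m = monomial (k • α + β) (1 : K)},
      m ∉ Ideal.span
        ({m' : MvPolynomial (Fin n) K |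
            ∃ α ∈ A, ∃ β ∈ B, m' = monomial (k • α + β) (1 : K)} \ {m}) := by
  refine ⟨?_, ?_, ?_⟩
  · rw [Ideal.span_mul_span]
    congr 1
    ext x
    constructor
    · intro hx
      obtain ⟨s, ⟨α, hα, rfl⟩, t, ⟨β, hβ, rfl⟩, rfl⟩ := Set.mem_mul.mp hx
      exact ⟨α, hα, β, hβ, by rw [monomial_mul, one_mul]⟩
    · rintro ⟨α, hα, β, hβ, rfl⟩
      refine Set.mem_mul.mpr ⟨_, ⟨α, hα, rfl⟩, _, ⟨β, hβ, rfl⟩, ?_⟩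
      rw [monomial_mul, one_mul]
  · have hset : {m : MvPolynomial (Fin n) K |
        ∃ α ∈ A, ∃ β ∈ B, m = monomial (k • α + β) (1 : K)}
        = (fun p : (Fin n →₀ ℕ) × (Fin n →₀ ℕ) =>
            monomial (k • p.1 + p.2) (1 : K)) '' ↑(A ×ˢ B) := by
      ext x
      simp only [Set.mem_setOf_eq, Set.mem_image, Finset.mem_coe, Finset.mem_product]
      constructor
      · rintro ⟨α, hα, β, hβ, rfl⟩; exact ⟨(α, β), ⟨hα, hβ⟩, rfl⟩
      · rintro ⟨⟨α, β⟩, ⟨hα, hβ⟩, rfl⟩; exact ⟨α, hα, β, hβ, rfl⟩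
    rw [hset, Set.ncard_image_of_injOn, Set.ncard_coe_finset, Finset.card_product]
    rintro ⟨α, β⟩ hp ⟨α', β'⟩ hq h
    simp only [Finset.mem_coe, Finset.mem_product] at hp hq
    have hexp := monomial_left_injective (one_ne_zero (α := K)) h
    obtain ⟨h1, h2⟩ := exp_inj hd (hB β hp.2) (hB β' hq.2) hexp
    exact Prod.ext h1 h2
  · rintro m ⟨α, hα, β, hβ, rfl⟩ hmem
    set E : Set (Fin n →₀ ℕ) := {γ | ∃ α ∈ A, ∃ β ∈ B, γ = k • α + β} with hE
    have hsets : {m' : MvPolynomial (Fin n) K |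
          ∃ α ∈ A, ∃ β ∈ B, m' = monomial (k • α + β) (1 : K)} \ {monomial (k • α + β) (1 : K)}
        = (fun s => monomial s (1 : K)) '' (E \ {k • α + β}) := by
      ext x
      simp only [Set.mem_diff, Set.mem_setOf_eq, Set.mem_singleton_iff, Set.mem_image, hE]
      constructor
      · rintro ⟨⟨α', hα', β', hβ', rfl⟩, hne⟩
        exact ⟨k • α' + β', ⟨⟨α', hα', β', hβ', rfl⟩, fun he => hne (by rw [he])⟩, rfl⟩
      · rintro ⟨γ, ⟨⟨α', hα', β', hβ', rfl⟩, hne⟩, rfl⟩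
        exact ⟨⟨α', hα', β', hβ', rfl⟩,
          fun he => hne (monomial_left_injective (one_ne_zero (α := K)) he)⟩
    rw [hsets, mem_ideal_span_monomial_image] at hmem
    have hsupp : (k • α + β) ∈ (monomial (k • α + β) (1 : K)).support := by
      simp [support_monomial]
    obtain ⟨δ, ⟨⟨α', hα', β', hβ', rfl⟩, hne⟩, hle⟩ := hmem _ hsupp
    have hsum : ∀ (a b : Fin n →₀ ℕ), a ∈ A → b ∈ B →
        ∑ i, (k • a + b) i = k * d₁ + d₂ := by
      intro a b ha hb
      simp only [Finsupp.add_apply, Finsupp.smul_apply, smul_eq_mul]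
      rw [Finset.sum_add_distrib, ← Finset.mul_sum, hA a ha, hB b hb]
    have hle' : ∀ i, (k • α' + β') i ≤ (k • α + β) i := fun i => hle i
    have heq : (k • α' + β') = (k • α + β) := by
      ext i
      by_contra hne'
      have hlt : (k • α' + β') i < (k • α + β) i := lt_of_le_of_ne (hle' i) hne'
      have : ∑ i, (k • α' + β') i < ∑ i, (k • α + β) i :=
        Finset.sum_lt_sum (fun j _ => hle' j) ⟨i, Finset.mem_univ i, hlt⟩
      rw [hsum α β hα hβ, hsum α' β' hα' hβ'] at this
      exact lt_irrefl _ this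
    exact hne (Set.mem_singleton_iff.mpr heq)
end

section
/- Let n ≥ 1 and s ≥ 1, let p_1, …, p_s be positive integers and a_1, …, a_s nonnegative integers such that a_1 p_1 + ⋯ + a_{j−1} p_{j−1} < p_j for every 2 ≤ j ≤ s. Suppose β_1, …, β_s and β′_1, …, β′_s are exponent vectors in Fin n → ℕ such that β_j and β′_j both have total degree a_j for each j. If Σ_{j=1}^{s} p_j·β_j = Σ_{j=1}^{s} p_j·β′_j (componentwise), then β_j = β′_j for every j. -/
lemma special_key (p a : ℕ → ℕ) : ∀ s : ℕ,
    (∀ j, 1 ≤ j → j ≤ s → 0 < p j) →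
    (∀ j, 2 ≤ j → j ≤ s → ∑ m ∈ Finset.Icc 1 (j - 1), a m * p m < p j) →
    ∀ x x' : ℕ → ℕ,
    (∀ j, 1 ≤ j → j ≤ s → x j ≤ a j) →
    (∀ j, 1 ≤ j → j ≤ s → x' j ≤ a j) →
    (∑ j ∈ Finset.Icc 1 s, p j * x j = ∑ j ∈ Finset.Icc 1 s, p j * x' j) →
    ∀ j, 1 ≤ j → j ≤ s → x j = x' j := by
  intro s
  induction s with
  | zero => intro _ _ _ _ _ _ _ j hj1 hj0; omega
  | succ t ih =>
    intro hp hsum x x' hx hx' heq j hj1 hjs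
    have hsplit : ∀ y : ℕ → ℕ, ∑ m ∈ Finset.Icc 1 (t+1), p m * y m
        = (∑ m ∈ Finset.Icc 1 t, p m * y m) + p (t+1) * y (t+1) := by
      intro y
      rw [← Finset.sum_Icc_succ_top (by omega : 1 ≤ t+1)]
    have hbound : ∀ y : ℕ → ℕ, (∀ j, 1 ≤ j → j ≤ t+1 → y j ≤ a j) →
        ∑ m ∈ Finset.Icc 1 t, p m * y m < p (t+1) := by
      intro y hy
      rcases Nat.eq_zero_or_pos t with ht | ht
      · subst ht; simpa using hp 1 le_rfl le_rfl
      · calc ∑ m ∈ Finset.Icc 1 t, p m * y m ≤ ∑ m ∈ Finset.Icc 1 t, a m * p m := by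
              apply Finset.sum_le_sum
              intro m hm
              simp only [Finset.mem_Icc] at hm
              rw [mul_comm]
              exact Nat.mul_le_mul_right _ (hy m hm.1 (by omega))
          _ < p (t+1) := by
              have := hsum (t+1) (by omega) le_rfl
              simpa using this
    have hR := hbound x hx
    have hR' := hbound x' hx'
    rw [hsplit x, hsplit x'] at heq
    have htop : x (t+1) = x' (t+1) := by
      have hppos := hp (t+1) (by omega) le_rfl
      have h1 : ((∑ m ∈ Finset.Icc 1 t, p m * x m) + p (t+1) * x (t+1)) / p (t+1) = x (t+1) := by
        rw [Nat.add_mul_div_left _ _ hppos, Nat.div_eq_of_lt hR, zero_add]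
      have h2 : ((∑ m ∈ Finset.Icc 1 t, p m * x' m) + p (t+1) * x' (t+1)) / p (t+1) = x' (t+1) := by
        rw [Nat.add_mul_div_left _ _ hppos, Nat.div_eq_of_lt hR', zero_add]
      rw [← h1, ← h2, heq]
    rcases Nat.eq_or_lt_of_le hjs with hj | hj
    · subst hj; exact htop
    · have hrest : ∑ m ∈ Finset.Icc 1 t, p m * x m = ∑ m ∈ Finset.Icc 1 t, p m * x' m := by
        rw [htop] at heq; exact Nat.add_right_cancel heq
      exact ih (fun j h1 h2 => hp j h1 (by omega)) (fun j h1 h2 => hsum j h1 (by omega))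
        x x' (fun j h1 h2 => hx j h1 (by omega)) (fun j h1 h2 => hx' j h1 (by omega))
        hrest j hj1 (by omega)

/-- Injectivity of products of generators of the factors of a special ideal:
if `∑_{m<j} a m * p m < p j` for all `2 ≤ j ≤ s`, `β j` and `β' j` have total
degree `a j`, and `∑ j, p j • β j = ∑ j, p j • β' j` componentwise, then
`β j = β' j` for every `j`. -/
theorem special_ideal_generator_uniqueness (n : ℕ) (hn : 1 ≤ n) (s : ℕ)
    (hs : 1 ≤ s) (p a : ℕ → ℕ)
    (hp : ∀ j, 1 ≤ j → j ≤ s → 0 < p j)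
    (hsum : ∀ j, 2 ≤ j → j ≤ s → ∑ m ∈ Finset.Icc 1 (j - 1), a m * p m < p j)
    (β β' : ℕ → Fin n → ℕ)
    (hβ : ∀ j, 1 ≤ j → j ≤ s → ∑ i, β j i = a j)
    (hβ' : ∀ j, 1 ≤ j → j ≤ s → ∑ i, β' j i = a j)
    (h : ∑ j ∈ Finset.Icc 1 s, p j • β j = ∑ j ∈ Finset.Icc 1 s, p j • β' j) :
    ∀ j, 1 ≤ j → j ≤ s → β j = β' j := by
  intro j hj1 hjs
  funext i
  have hcomp : ∑ m ∈ Finset.Icc 1 s, p m * β m i = ∑ m ∈ Finset.Icc 1 s, p m * β' m i := by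
    have := congrFun h i
    simpa [Finset.sum_apply, Pi.smul_apply, smul_eq_mul] using this
  refine special_key p a s hp hsum (fun m => β m i) (fun m => β' m i)
    (fun m h1 h2 => ?_) (fun m h1 h2 => ?_) hcomp j hj1 hjs
  · rw [← hβ m h1 h2]; exact Finset.single_le_sum (fun _ _ => Nat.zero_le _) (Finset.mem_univ i)
  · rw [← hβ' m h1 h2]; exact Finset.single_le_sum (fun _ _ => Nat.zero_le _) (Finset.mem_univ i)
end

section
/- Let n ≥ 1 and s ≥ 1, let p_1, …, p_s be positive integers and a_1, …, a_s nonnegative integers such that a_1 p_1 + ⋯ + a_{j−1} p_{j−1} < p_j for every 2 ≤ j ≤ s, and let n = ℓ_1 ≥ ℓ_2 ≥ ⋯ ≥ ℓ_s ≥ 1 be integers. For each j let B_j be the set of exponent vectors β : Fin n → ℕ of total degree a_j with β(i) = 0 for all i ≥ ℓ_j, and let T = { Σ_{j=1}^{s} p_j·β_j : β_j ∈ B_j for each j }. Then: (1) every element of T has total degree a_1 p_1 + ⋯ + a_s p_s; (2) T has exactly Π_{j=1}^{s} C(a_j + ℓ_j − 1, ℓ_j − 1) elements, where C denotes the binomial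 coefficient; and (3) the set of minimal elements, with respect to the componentwise order, of the upward closure { γ | ∃ τ ∈ T, τ ≤ γ componentwise } is exactly T. -/
open Finset

lemma aux_count {k : ℕ} (x : Fin k → ℕ) (i : Fin k) :
    Multiset.count i (∑ j, x j • ({j} : Multiset (Fin k))) = x i := by
  simp [Multiset.count_sum', Multiset.count_nsmul, Multiset.count_singleton]

lemma aux_tuple_card (k m : ℕ) (hk : 1 ≤ k) :
    (Finset.Nat.antidiagonalTuple k m).card = (m + k - 1).choose (k - 1) := by
  have h1 : (Finset.Nat.antidiagonalTuple k m).card = Fintype.card (Sym (Fin k) m) := by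
    rw [Fintype.card]
    refine Finset.card_bij'
      (fun x hx => ⟨∑ j, x j • ({j} : Multiset (Fin k)), by
        simp [map_sum Multiset.card, Finset.Nat.mem_antidiagonalTuple.mp hx]⟩)
      (fun σ _ => fun i => Multiset.count i (σ : Multiset (Fin k))) ?_ ?_ ?_ ?_
    · intro a ha; exact Finset.mem_univ _
    · intro σ _
      rw [Finset.Nat.mem_antidiagonalTuple]
      have := Multiset.sum_count_eq_card (s := (Finset.univ : Finset (Fin k)))
        (m := (σ : Multiset (Fin k))) (fun a _ => Finset.mem_univ a)
      rw [this]; exact σ.2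
    · intro x hx; funext i; exact aux_count x i
    · intro σ _
      apply Subtype.ext
      apply Multiset.ext.mpr
      intro i
      simp [aux_count]
  rw [h1, Sym.card_sym_eq_choose, Fintype.card_fin]
  have hm : m ≤ k + m - 1 := by omega
  rw [← Nat.choose_symm hm]
  congr 1 <;> omega

lemma aux_sum_lt {M : Type*} [AddCommMonoid M] {n k : ℕ} (hkn : k ≤ n) (f : Fin n → M)
    (hf : ∀ i : Fin n, k ≤ (i : ℕ) → f i = 0) :
    ∑ i, f i = ∑ i : Fin k, f (Fin.castLE hkn i) := by
  set g : ℕ → M := fun i => if h : i < n then f ⟨i, h⟩ else 0 with hg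
  have h1 : ∑ i, f i = ∑ i ∈ range n, g i := by
    rw [← Fin.sum_univ_eq_sum_range]
    exact Finset.sum_congr rfl fun i _ => by simp [hg]
  have h2 : ∑ i : Fin k, f (Fin.castLE hkn i) = ∑ i ∈ range k, g i := by
    rw [← Fin.sum_univ_eq_sum_range]
    refine Finset.sum_congr rfl fun i _ => ?_
    simp only [hg]
    rw [dif_pos (lt_of_lt_of_le i.2 hkn)]; rfl
  rw [h1, h2]
  refine (Finset.sum_subset (Finset.range_subset_range.mpr hkn) fun i hi hik => ?_).symm
  simp only [Finset.mem_range, not_lt] at hi hik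
  simp only [hg]
  rw [dif_pos hi]
  exact hf _ hik

lemma aux_B_card (n k m : ℕ) (hkn : k ≤ n) :
    ((Finset.Nat.antidiagonalTuple n m).filter
        (fun β => ∀ i : Fin n, k ≤ (i : ℕ) → β i = 0)).card
      = (Finset.Nat.antidiagonalTuple k m).card := by
  refine Finset.card_bij'
    (fun β _ => fun i : Fin k => β (Fin.castLE hkn i))
    (fun x _ => fun i : Fin n => if h : (i : ℕ) < k then x ⟨i, h⟩ else 0)
    ?_ ?_ ?_ ?_
  · intro β hβ
    rw [Finset.mem_filter, Finset.Nat.mem_antidiagonalTuple] at hβ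
    rw [Finset.Nat.mem_antidiagonalTuple, ← aux_sum_lt hkn β hβ.2, hβ.1]
  · intro x hx
    rw [Finset.Nat.mem_antidiagonalTuple] at hx
    rw [Finset.mem_filter, Finset.Nat.mem_antidiagonalTuple]
    constructor
    · have hz : ∀ i : Fin n, k ≤ (i : ℕ) →
          (if h : (i : ℕ) < k then x ⟨i, h⟩ else 0) = 0 := by
        intro i hi; rw [dif_neg (by omega)]
      rw [aux_sum_lt hkn _ hz, ← hx]
      refine Finset.sum_congr rfl fun i _ => ?_
      rw [dif_pos (show ((Fin.castLE hkn i : Fin n) : ℕ) < k from i.2)]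
      exact congrArg x (Fin.ext rfl)
    · intro i hi
      show (if h : (i : ℕ) < k then x ⟨i, h⟩ else 0) = 0
      rw [dif_neg (by omega)]
  · intro β hβ
    rw [Finset.mem_filter] at hβ
    funext i
    show (if h : (i : ℕ) < k then β (Fin.castLE hkn ⟨(i : ℕ), h⟩) else 0) = β i
    by_cases h : (i : ℕ) < k
    · rw [dif_pos h]
      exact congrArg β (Fin.ext rfl)
    · rw [dif_neg h]
      exact (hβ.2 i (not_lt.mp h)).symm
  · intro x _
    funext i
    show (if h : ((Fin.castLE hkn i : Fin n) : ℕ) < k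
        then x ⟨((Fin.castLE hkn i : Fin n) : ℕ), h⟩ else 0) = x i
    rw [dif_pos (show ((Fin.castLE hkn i : Fin n) : ℕ) < k from i.2)]
    exact congrArg x (Fin.ext rfl)

lemma aux_Icc_sum_fin {M : Type*} [AddCommMonoid M] (s : ℕ) (f : ℕ → M) :
    ∑ j ∈ Finset.Icc 1 s, f j = ∑ j : Fin s, f ((j : ℕ) + 1) := by
  rw [← Finset.Ico_add_one_right_eq_Icc, Finset.sum_Ico_eq_sum_range,
    Fin.sum_univ_eq_sum_range (fun j => f (j + 1))]
  have h : s + 1 - 1 = s := by omega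
  rw [h]
  exact Finset.sum_congr rfl fun i _ => by rw [Nat.add_comm]

lemma aux_Icc_prod_fin {M : Type*} [CommMonoid M] (s : ℕ) (f : ℕ → M) :
    ∏ j ∈ Finset.Icc 1 s, f j = ∏ j : Fin s, f ((j : ℕ) + 1) := by
  rw [← Finset.Ico_add_one_right_eq_Icc, Finset.prod_Ico_eq_prod_range,
    Fin.prod_univ_eq_prod_range (fun j => f (j + 1))]
  have h : s + 1 - 1 = s := by omega
  rw [h]
  exact Finset.prod_congr rfl fun i _ => by rw [Nat.add_comm]

lemma aux_inj (n s : ℕ) (p a : ℕ → ℕ) (hp : ∀ j, 1 ≤ j → j ≤ s → 0 < p j)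
    (hsum : ∀ j, 2 ≤ j → j ≤ s → ∑ m ∈ Finset.Icc 1 (j - 1), a m * p m < p j) :
    ∀ t, t ≤ s → ∀ β β' : ℕ → Fin n → ℕ,
      (∀ j, 1 ≤ j → j ≤ t → ∑ i, β j i = a j) →
      (∀ j, 1 ≤ j → j ≤ t → ∑ i, β' j i = a j) →
      (∑ j ∈ Finset.Icc 1 t, p j • β j) = (∑ j ∈ Finset.Icc 1 t, p j • β' j) →
      ∀ j, 1 ≤ j → j ≤ t → β j = β' j := by
  intro t
  induction t with
  | zero => intro _ β β' _ _ _ j h1 h0; omega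
  | succ t ih =>
    intro hts β β' hβ hβ' heq
    have hbound : ∀ δ : ℕ → Fin n → ℕ, (∀ j, 1 ≤ j → j ≤ t → ∑ i, δ j i = a j) →
        ∀ i : Fin n, (∑ j ∈ Finset.Icc 1 t, p j • δ j) i < p (t + 1) := by
      intro δ hδ i
      have h1 : (∑ j ∈ Finset.Icc 1 t, p j • δ j) i
          = ∑ j ∈ Finset.Icc 1 t, p j * δ j i := by
        simp [Finset.sum_apply]
      rw [h1]
      have h2 : ∑ j ∈ Finset.Icc 1 t, p j * δ j i ≤ ∑ j ∈ Finset.Icc 1 t, a j * p j := by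
        refine Finset.sum_le_sum fun j hj => ?_
        rw [Finset.mem_Icc] at hj
        have hle : δ j i ≤ a j := by
          rw [← hδ j hj.1 hj.2]
          exact Finset.single_le_sum (fun _ _ => Nat.zero_le _) (Finset.mem_univ i)
        calc p j * δ j i ≤ p j * a j := Nat.mul_le_mul_left _ hle
          _ = a j * p j := Nat.mul_comm _ _
      refine lt_of_le_of_lt h2 ?_
      rcases Nat.eq_zero_or_pos t with rfl | ht
      · simpa using hp 1 le_rfl (by omega)
      · have h3 := hsum (t + 1) (by omega) hts
        simpa using h3
    rw [Finset.sum_Icc_succ_top (by omega), Finset.sum_Icc_succ_top (by omega)] at heq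
    have hkey : ∀ i, β (t + 1) i = β' (t + 1) i ∧
        (∑ j ∈ Finset.Icc 1 t, p j • β j) i = (∑ j ∈ Finset.Icc 1 t, p j • β' j) i := by
      intro i
      have he : (∑ j ∈ Finset.Icc 1 t, p j • β j) i + p (t + 1) * β (t + 1) i
          = (∑ j ∈ Finset.Icc 1 t, p j • β' j) i + p (t + 1) * β' (t + 1) i := by
        have h0 := congrFun heq i
        simpa using h0
      have hb := hbound β (fun j h1 h2 => hβ j h1 (by omega)) i
      have hb' := hbound β' (fun j h1 h2 => hβ' j h1 (by omega)) i
      have hpt : 0 < p (t + 1) := hp (t + 1) (by omega) hts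
      have hx : β (t + 1) i = β' (t + 1) i := by
        have d1 : ((∑ j ∈ Finset.Icc 1 t, p j • β j) i + p (t + 1) * β (t + 1) i) / p (t + 1)
            = β (t + 1) i := by
          rw [Nat.add_mul_div_left _ _ hpt, Nat.div_eq_of_lt hb]
          omega
        have d2 : ((∑ j ∈ Finset.Icc 1 t, p j • β' j) i + p (t + 1) * β' (t + 1) i) / p (t + 1)
            = β' (t + 1) i := by
          rw [Nat.add_mul_div_left _ _ hpt, Nat.div_eq_of_lt hb']
          omega
        rw [← d1, ← d2, he]
      refine ⟨hx, ?_⟩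
      rw [hx] at he
      omega
    have hlast : β (t + 1) = β' (t + 1) := funext fun i => (hkey i).1
    have hrest : (∑ j ∈ Finset.Icc 1 t, p j • β j) = (∑ j ∈ Finset.Icc 1 t, p j • β' j) :=
      funext fun i => (hkey i).2
    have IH := ih (by omega) β β' (fun j h1 h2 => hβ j h1 (by omega))
      (fun j h1 h2 => hβ' j h1 (by omega)) hrest
    intro j h1 hj
    rcases Nat.lt_or_ge j (t + 1) with h | h
    · exact IH j h1 (by omega)
    · have hjt : j = t + 1 := by omega
      rw [hjt]; exact hlast

/-- The exponent vectors of the minimal generators of a special ideal: every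
element of `T = {∑ j, p j • β j : β j of total degree a j supported on the
first ℓ j coordinates}` has total degree `∑ j, a j * p j`; `T` has exactly
`∏ j, C(a j + ℓ j - 1, ℓ j - 1)` elements; and the minimal elements of the
upward closure of `T` are exactly the elements of `T`. -/
theorem special_ideal_generator_set (n : ℕ) (hn : 1 ≤ n) (s : ℕ) (hs : 1 ≤ s)
    (p a ℓ : ℕ → ℕ)
    (hp : ∀ j, 1 ≤ j → j ≤ s → 0 < p j)
    (hsum : ∀ j, 2 ≤ j → j ≤ s → ∑ m ∈ Finset.Icc 1 (j - 1), a m * p m < p j)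
    (hℓ1 : ℓ 1 = n)
    (hℓmono : ∀ j, 1 ≤ j → j ≤ s - 1 → ℓ (j + 1) ≤ ℓ j)
    (hℓs : 1 ≤ ℓ s)
    (T : Set (Fin n → ℕ))
    (hT : T = {γ : Fin n → ℕ | ∃ β : ℕ → Fin n → ℕ,
      (∀ j, 1 ≤ j → j ≤ s →
        (∑ i, β j i = a j) ∧ ∀ i : Fin n, ℓ j ≤ (i : ℕ) → β j i = 0) ∧
      γ = ∑ j ∈ Finset.Icc 1 s, p j • β j}) :
    (∀ γ ∈ T, ∑ i, γ i = ∑ j ∈ Finset.Icc 1 s, a j * p j) ∧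
    T.ncard = ∏ j ∈ Finset.Icc 1 s, Nat.choose (a j + ℓ j - 1) (ℓ j - 1) ∧
    {γ : Fin n → ℕ | (∃ τ ∈ T, τ ≤ γ) ∧
        ∀ γ' : Fin n → ℕ, (∃ τ ∈ T, τ ≤ γ') → γ' ≤ γ → γ' = γ} = T := by
  classical
  have hmono : ∀ k, k ≤ s → ∀ j, 1 ≤ j → j ≤ k → ℓ k ≤ ℓ j := by
    intro k
    induction k with
    | zero => intro _ j h1 h0; omega
    | succ k ihk =>
      intro hk j h1 hj
      rcases Nat.lt_or_ge j (k + 1) with h | h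
      · have hjk : j ≤ k := by omega
        exact le_trans (hℓmono k (by omega) (by omega)) (ihk (by omega) j h1 hjk)
      · have hjk : j = k + 1 := by omega
        rw [hjk]
  have hℓle : ∀ j, 1 ≤ j → j ≤ s → ℓ j ≤ n := by
    intro j h1 hj
    rw [← hℓ1]
    exact hmono j hj 1 le_rfl h1
  have hℓge : ∀ j, 1 ≤ j → j ≤ s → 1 ≤ ℓ j := by
    intro j h1 hj
    exact le_trans hℓs (hmono s le_rfl j h1 hj)
  have part1 : ∀ γ ∈ T, ∑ i, γ i = ∑ j ∈ Finset.Icc 1 s, a j * p j := by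
    intro γ hγ
    rw [hT] at hγ
    obtain ⟨β, hβ, rfl⟩ := hγ
    calc ∑ i, (∑ j ∈ Finset.Icc 1 s, p j • β j) i
        = ∑ i, ∑ j ∈ Finset.Icc 1 s, p j * β j i := by
          refine Finset.sum_congr rfl fun i _ => ?_
          simp [Finset.sum_apply]
      _ = ∑ j ∈ Finset.Icc 1 s, ∑ i, p j * β j i := Finset.sum_comm
      _ = ∑ j ∈ Finset.Icc 1 s, a j * p j := by
          refine Finset.sum_congr rfl fun j hj => ?_
          rw [Finset.mem_Icc] at hj
          rw [← Finset.mul_sum, (hβ j hj.1 hj.2).1, Nat.mul_comm]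
  refine ⟨part1, ?_, ?_⟩
  · -- Part 2 : cardinality
    set B : ℕ → Finset (Fin n → ℕ) := fun j =>
      (Finset.Nat.antidiagonalTuple n (a j)).filter
        (fun β => ∀ i : Fin n, ℓ j ≤ (i : ℕ) → β i = 0) with hB
    have hBmem : ∀ j (β : Fin n → ℕ), β ∈ B j ↔
        (∑ i, β i = a j ∧ ∀ i : Fin n, ℓ j ≤ (i : ℕ) → β i = 0) := by
      intro j β
      rw [hB]
      simp only [Finset.mem_filter, Finset.Nat.mem_antidiagonalTuple]
    set D : Finset (Fin s → Fin n → ℕ) :=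
      Fintype.piFinset (fun j : Fin s => B ((j : ℕ) + 1)) with hD
    set φ : (Fin s → Fin n → ℕ) → (Fin n → ℕ) :=
      fun b => ∑ j : Fin s, p ((j : ℕ) + 1) • b j with hφ
    have hext : ∀ (b : Fin s → Fin n → ℕ) (j : Fin s),
        (if h : (j : ℕ) + 1 - 1 < s then b ⟨(j : ℕ) + 1 - 1, h⟩ else 0) = b j := by
      intro b j
      rw [dif_pos (show (j : ℕ) + 1 - 1 < s by omega)]
      exact congrArg b (Fin.ext (show (j : ℕ) + 1 - 1 = (j : ℕ) by omega))
    have hsum2 : ∀ b : Fin s → Fin n → ℕ,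
        (∑ j ∈ Finset.Icc 1 s, p j • (if h : j - 1 < s then b ⟨j - 1, h⟩ else 0)) = φ b := by
      intro b
      rw [aux_Icc_sum_fin s (fun j => p j • (if h : j - 1 < s then b ⟨j - 1, h⟩ else 0))]
      simp only [hφ]
      refine Finset.sum_congr rfl fun j _ => ?_
      show p ((j : ℕ) + 1) • (if h : (j : ℕ) + 1 - 1 < s then b ⟨(j : ℕ) + 1 - 1, h⟩ else 0)
          = p ((j : ℕ) + 1) • b j
      rw [hext b j]
    have hcond : ∀ b : Fin s → Fin n → ℕ, b ∈ D → ∀ j, 1 ≤ j → j ≤ s →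
        (∑ i, (if h : j - 1 < s then b ⟨j - 1, h⟩ else 0) i = a j) ∧
        (∀ i : Fin n, ℓ j ≤ (i : ℕ) → (if h : j - 1 < s then b ⟨j - 1, h⟩ else 0) i = 0) := by
      intro b hb j h1 hj
      rw [hD, Fintype.mem_piFinset] at hb
      have hlt : j - 1 < s := by omega
      rw [dif_pos hlt]
      have hb' := (hBmem _ _).mp (hb ⟨j - 1, hlt⟩)
      have hidx : ((⟨j - 1, hlt⟩ : Fin s) : ℕ) + 1 = j := by
        show j - 1 + 1 = j
        omega
      rw [hidx] at hb'
      exact hb'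
    have hTD : T = ↑(D.image φ) := by
      rw [hT]
      ext γ
      simp only [Set.mem_setOf_eq, Finset.coe_image, Set.mem_image, Finset.mem_coe]
      constructor
      · rintro ⟨β, hβ, rfl⟩
        refine ⟨fun j : Fin s => β ((j : ℕ) + 1), ?_, ?_⟩
        · rw [hD, Fintype.mem_piFinset]
          intro j
          rw [hBmem]
          exact hβ ((j : ℕ) + 1) (by omega) (by have := j.2; omega)
        · simp only [hφ]
          rw [aux_Icc_sum_fin s (fun j => p j • β j)]
      · rintro ⟨b, hb, rfl⟩
        refine ⟨fun j => if h : j - 1 < s then b ⟨j - 1, h⟩ else 0, ?_, ?_⟩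
        · intro j h1 hj
          exact hcond b hb j h1 hj
        · show φ b = ∑ j ∈ Finset.Icc 1 s, p j • (if h : j - 1 < s then b ⟨j - 1, h⟩ else 0)
          exact (hsum2 b).symm
    have hinjOn : Set.InjOn φ ↑D := by
      intro b hb b' hb' hbb
      rw [Finset.mem_coe] at hb hb'
      have key := aux_inj n s p a hp hsum s le_rfl
        (fun j => if h : j - 1 < s then b ⟨j - 1, h⟩ else 0)
        (fun j => if h : j - 1 < s then b' ⟨j - 1, h⟩ else 0)
        (fun j h1 hj => (hcond b hb j h1 hj).1)
        (fun j h1 hj => (hcond b' hb' j h1 hj).1)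
        ((hsum2 b).trans (hbb.trans (hsum2 b').symm))
      funext j
      have hj := key ((j : ℕ) + 1) (by omega) (by have := j.2; omega)
      exact (hext b j).symm.trans (hj.trans (hext b' j))
    rw [hTD, Set.ncard_coe_finset, Finset.card_image_of_injOn hinjOn, hD,
      Fintype.card_piFinset,
      aux_Icc_prod_fin s (fun j => Nat.choose (a j + ℓ j - 1) (ℓ j - 1))]
    refine Finset.prod_congr rfl fun j _ => ?_
    have h1j : 1 ≤ (j : ℕ) + 1 := by omega
    have hjs : (j : ℕ) + 1 ≤ s := by have := j.2; omega
    rw [hB]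
    rw [aux_B_card n (ℓ ((j : ℕ) + 1)) (a ((j : ℕ) + 1)) (hℓle _ h1j hjs),
      aux_tuple_card _ _ (hℓge _ h1j hjs)]
  · -- Part 3
    ext γ
    simp only [Set.mem_setOf_eq]
    constructor
    · rintro ⟨⟨τ, hτT, hτγ⟩, hmin⟩
      have hτeq := hmin τ ⟨τ, hτT, le_rfl⟩ hτγ
      rw [← hτeq]; exact hτT
    · intro hγ
      refine ⟨⟨γ, hγ, le_rfl⟩, ?_⟩
      intro γ' ⟨τ, hτT, hτγ'⟩ hγ'γ
      have hτγ : τ ≤ γ := le_trans hτγ' hγ'γ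
      have hsumeq : ∑ i, τ i = ∑ i, γ i := by
        rw [part1 τ hτT, part1 γ hγ]
      have hτeq : τ = γ := by
        funext i
        exact (Finset.sum_eq_sum_iff_of_le (fun i _ => hτγ i)).mp hsumeq i (Finset.mem_univ i)
      funext i
      exact le_antisymm (hγ'γ i) (hτeq ▸ hτγ' i)
end

section
/- Let K be a field, n ≥ 1 and s ≥ 1, let p_1, …, p_s be positive integers and a_1, …, a_s nonnegative integers such that a_1 p_1 + ⋯ + a_{j−1} p_{j−1} < p_j for every 2 ≤ j ≤ s, and let n = ℓ_1 ≥ ℓ_2 ≥ ⋯ ≥ ℓ_s ≥ 1 be integers. In R = MvPolynomial (Fin n) K consider the special ideal I = Π_{j=1}^{s} (x_1^{p_j}, x_2^{p_j}, …, x_{ℓ_j}^{p_j})^{a_j}. Then I is generated by the set M of monomials X^γ, where γ ranges over all sums Σ_{j=1}^{s} p_j·β_j with each β_j an exponent vector of total degree a_j supported on the first ℓ_j coordinates; every monomial in M has total degree a_1 p_1 + ⋯ + a_s p_s; M has exactly Π_{j=1}^{s} C(a_j + ℓ_j − 1, ℓ_j − 1) elements; and no monomial of M lies in the ideal generated by the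 remaining monomials of M. -/
open MvPolynomial Pointwise

section Aux

lemma nat_uniq' : ∀ (s : ℕ) (p a b b' : ℕ → ℕ),
    (∀ j, 1 ≤ j → j ≤ s → 0 < p j) →
    (∀ j, 2 ≤ j → j ≤ s → ∑ m ∈ Finset.Icc 1 (j - 1), a m * p m < p j) →
    (∀ j, 1 ≤ j → j ≤ s → b j ≤ a j ∧ b' j ≤ a j) →
    ∑ j ∈ Finset.Icc 1 s, p j * b j = ∑ j ∈ Finset.Icc 1 s, p j * b' j →
    ∀ j, 1 ≤ j → j ≤ s → b j = b' j := by
  intro s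
  induction s with
  | zero => intro _ _ _ _ _ _ _ _ j h1 h2; omega
  | succ s ih =>
    intro p a b b' hp hsum hb hEq j hj1 hj2
    rw [Finset.sum_Icc_succ_top (by omega), Finset.sum_Icc_succ_top (by omega)] at hEq
    have hpre : ∀ c : ℕ → ℕ, (∀ m, 1 ≤ m → m ≤ s → c m ≤ a m) →
        ∑ m ∈ Finset.Icc 1 s, p m * c m ≤ ∑ m ∈ Finset.Icc 1 s, a m * p m := by
      intro c hc
      refine Finset.sum_le_sum ?_
      intro m hm
      rw [Finset.mem_Icc] at hm
      rw [mul_comm]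
      exact Nat.mul_le_mul_right _ (hc m hm.1 hm.2)
    have key : b (s+1) = b' (s+1) ∧
        ∑ m ∈ Finset.Icc 1 s, p m * b m = ∑ m ∈ Finset.Icc 1 s, p m * b' m := by
      rcases Nat.eq_zero_or_pos s with rfl | hs
      · rw [show Finset.Icc 1 0 = ∅ from rfl, Finset.sum_empty, Finset.sum_empty] at hEq ⊢
        simp only [zero_add] at hEq
        exact ⟨Nat.eq_of_mul_eq_mul_left (hp 1 le_rfl le_rfl) hEq, rfl⟩
      · have hlt := hsum (s+1) (by omega) le_rfl
        simp only [Nat.add_sub_cancel] at hlt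
        have h1 : ∑ m ∈ Finset.Icc 1 s, p m * b m < p (s+1) :=
          lt_of_le_of_lt (hpre b fun m u1 u2 => (hb m u1 (by omega)).1) hlt
        have h2 : ∑ m ∈ Finset.Icc 1 s, p m * b' m < p (s+1) :=
          lt_of_le_of_lt (hpre b' fun m u1 u2 => (hb m u1 (by omega)).2) hlt
        have hpos := hp (s+1) (by omega) le_rfl
        have hq : b (s+1) = b' (s+1) := by
          have e1 : (∑ m ∈ Finset.Icc 1 s, p m * b m + p (s+1) * b (s+1)) / p (s+1) = b (s+1) := by
            rw [Nat.add_mul_div_left _ _ hpos, Nat.div_eq_of_lt h1, Nat.zero_add]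
          have e2 : (∑ m ∈ Finset.Icc 1 s, p m * b' m + p (s+1) * b' (s+1)) / p (s+1)
              = b' (s+1) := by
            rw [Nat.add_mul_div_left _ _ hpos, Nat.div_eq_of_lt h2, Nat.zero_add]
          rw [← e1, ← e2, hEq]
        exact ⟨hq, by rw [hq] at hEq; omega⟩
    rcases Nat.lt_or_ge j (s+1) with h | h
    · exact ih p a b b' (fun m u1 u2 => hp m u1 (by omega))
        (fun m u1 u2 => hsum m u1 (by omega))
        (fun m u1 u2 => hb m u1 (by omega)) key.2 j hj1 (by omega)
    · have : j = s+1 := by omega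
      rw [this]; exact key.1

lemma prod_monomial_one' {K : Type*} [Field K] {n : ℕ} {ι : Type*} (t : Finset ι)
    (γ : ι → (Fin n →₀ ℕ)) :
    ∏ j ∈ t, (monomial (γ j) (1 : K)) = monomial (∑ j ∈ t, γ j) (1 : K) := by
  classical
  induction t using Finset.induction_on with
  | empty => simp
  | insert _ _ h ih =>
    rw [Finset.prod_insert h, Finset.sum_insert h, ih, monomial_mul, one_mul]

lemma span_finset_prod' {R : Type*} [CommRing R] {ι : Type*} (t : Finset ι) (S : ι → Set R) :
    ∏ j ∈ t, Ideal.span (S j) = Ideal.span (∏ j ∈ t, S j) := by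
  classical
  induction t using Finset.induction_on with
  | empty => simp [Ideal.one_eq_top]
  | insert _ _ h ih => rw [Finset.prod_insert h, Finset.prod_insert h, ih, Ideal.span_mul_span']

lemma mem_pow_char' {K : Type*} [Field K] {n : ℕ} (L q : ℕ) (x : MvPolynomial (Fin n) K) :
    ∀ c : ℕ,
      (x ∈ ({f : MvPolynomial (Fin n) K | ∃ i : Fin n, (i : ℕ) < L ∧ f = X i ^ q} ^ c : Set _)
      ↔ ∃ β : Fin n →₀ ℕ, (∑ i, β i = c) ∧ (∀ i : Fin n, L ≤ (i : ℕ) → β i = 0) ∧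
        x = monomial (q • β) (1 : K)) := by
  intro c
  induction c generalizing x with
  | zero =>
    simp only [pow_zero, Set.mem_one]
    constructor
    · rintro rfl
      exact ⟨0, by simp, by simp, by simp⟩
    · rintro ⟨β, hsum, hsupp, rfl⟩
      have : β = 0 := by
        ext i
        exact Finset.sum_eq_zero_iff.mp hsum i (Finset.mem_univ i)
      simp [this]
  | succ c ih =>
    rw [pow_succ, Set.mem_mul]
    constructor
    · rintro ⟨y, hy, z, hz, rfl⟩
      obtain ⟨β, hsum, hsupp, rfl⟩ := (ih y).mp hy
      obtain ⟨i, hi, rfl⟩ := hz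
      refine ⟨β + Finsupp.single i 1, ?_, ?_, ?_⟩
      · rw [Finset.sum_congr rfl (fun j _ => Finsupp.add_apply β (Finsupp.single i 1) j),
          Finset.sum_add_distrib, hsum]
        simp [Finsupp.single_apply, Finset.sum_ite_eq']
      · intro i' hi'
        have h1 : β i' = 0 := hsupp i' hi'
        have h2 : Finsupp.single i 1 i' = 0 := by
          rw [Finsupp.single_apply_eq_zero]
          intro h; exfalso; subst h; omega
        simp [h1, h2]
      · rw [X_pow_eq_monomial, monomial_mul, one_mul, smul_add]
        congr 1
        rw [Finsupp.smul_single]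
        simp
    · rintro ⟨β, hsum, hsupp, rfl⟩
      have hpos : ∃ i, 0 < β i := by
        by_contra h
        push_neg at h
        have : ∑ i, β i = 0 := Finset.sum_eq_zero fun i _ => by have := h i; omega
        omega
      obtain ⟨i, hi⟩ := hpos
      have hiL : (i : ℕ) < L := by
        by_contra h
        push_neg at h
        have := hsupp i h
        omega
      refine ⟨monomial (q • (β - Finsupp.single i 1)) (1 : K), ?_, X i ^ q, ⟨i, hiL, rfl⟩, ?_⟩
      · refine (ih _).mpr ⟨β - Finsupp.single i 1, ?_, ?_, rfl⟩
        · rw [Finset.sum_congr rfl (fun j _ => Finsupp.tsub_apply β (Finsupp.single i 1) j)]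
          have h1 : ∑ j, (β j - Finsupp.single i 1 j) + ∑ j, Finsupp.single i 1 j = ∑ j, β j := by
            rw [← Finset.sum_add_distrib]
            refine Finset.sum_congr rfl fun j _ => ?_
            rcases eq_or_ne j i with rfl | hne
            · simp only [Finsupp.single_eq_same]; omega
            · simp [Finsupp.single_apply, hne, Ne.symm]
          have h2 : ∑ j, (Finsupp.single i 1 : Fin n →₀ ℕ) j = 1 := by
            simp [Finsupp.single_apply, Finset.sum_ite_eq']
          omega
        · intro i' hi'
          have h1 : β i' = 0 := hsupp i' hi'
          rw [Finsupp.tsub_apply, h1]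
          omega
      · rw [X_pow_eq_monomial, monomial_mul, one_mul]
        have hexp : q • (β - Finsupp.single i 1) + Finsupp.single i q = q • β := by
          ext j
          rw [Finsupp.add_apply, Finsupp.smul_apply, Finsupp.smul_apply, Finsupp.tsub_apply]
          simp only [smul_eq_mul]
          rcases eq_or_ne i j with rfl | hne
          · simp only [Finsupp.single_eq_same]
            rw [Nat.mul_sub, Nat.mul_one]
            have hq : q ≤ q * β i := Nat.le_mul_of_pos_right q hi
            omega
          · simp [Finsupp.single_eq_of_ne' hne]
        rw [hexp]

lemma card_E' (n L c : ℕ) (hL1 : 1 ≤ L) (hLn : L ≤ n) :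
    Nat.card {β : Fin n →₀ ℕ // (∑ i, β i = c) ∧ ∀ i : Fin n, L ≤ (i : ℕ) → β i = 0}
      = (c + L - 1).choose (L - 1) := by
  have hmem : ∀ i : Fin n, i ∈ Finset.univ.map (Fin.castLEEmb hLn) ↔ (i : ℕ) < L := by
    intro i
    simp only [Finset.mem_map, Finset.mem_univ, true_and]
    constructor
    · rintro ⟨j, rfl⟩; exact j.2
    · intro h; exact ⟨⟨i, h⟩, rfl⟩
  have e1 : {β : Fin n →₀ ℕ // (∑ i, β i = c) ∧ ∀ i : Fin n, L ≤ (i : ℕ) → β i = 0}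
      ≃ {P : Fin L →₀ ℕ // P.sum (fun _ ↦ id) = c} := by
    refine
      { toFun := fun β => ⟨Finsupp.comapDomain (Fin.castLE hLn) β.1
          (by intro x _ y _ h; exact Fin.castLE_injective hLn h), ?_⟩
        invFun := fun P => ⟨Finsupp.embDomain (Fin.castLEEmb hLn) P.1, ?_, ?_⟩
        left_inv := ?_
        right_inv := ?_ }
    · rw [Finsupp.sum_fintype _ _ (fun _ => rfl)]
      obtain ⟨β, hβ1, hβ2⟩ := β
      have hss : ∑ i ∈ Finset.univ.map (Fin.castLEEmb hLn), β i = ∑ i : Fin n, β i :=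
        Finset.sum_subset (Finset.subset_univ _)
          (fun i _ hi => hβ2 i (by rw [hmem i] at hi; omega))
      simp only [Finsupp.comapDomain_apply]
      refine Eq.trans ?_ hβ1
      show ∑ x, id (β (Fin.castLE hLn x)) = _
      rw [← hss, Finset.sum_map]
      rfl
    · obtain ⟨P, hP⟩ := P
      have hss : ∑ i ∈ Finset.univ.map (Fin.castLEEmb hLn),
          (Finsupp.embDomain (Fin.castLEEmb hLn) P) i
          = ∑ i : Fin n, (Finsupp.embDomain (Fin.castLEEmb hLn) P) i := by
        refine Finset.sum_subset (Finset.subset_univ _) ?_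
        intro i _ hi
        apply Finsupp.embDomain_notin_range
        rw [Finset.mem_map] at hi
        push_neg at hi
        rintro ⟨j, rfl⟩
        exact hi j (Finset.mem_univ j) rfl
      rw [Finsupp.sum_fintype _ _ (fun _ => rfl)] at hP
      show ∑ i : Fin n, (Finsupp.embDomain (Fin.castLEEmb hLn) P) i = c
      rw [← hss, Finset.sum_map, ← hP]
      refine Finset.sum_congr rfl fun j _ => ?_
      exact Finsupp.embDomain_apply_self _ P j
    · intro i hi
      apply Finsupp.embDomain_notin_range
      rintro ⟨j, rfl⟩
      have := j.2
      rw [Fin.castLEEmb_apply, Fin.coe_castLE] at hi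
      omega
    · rintro ⟨β, hβ1, hβ2⟩
      ext i
      simp only
      rcases Nat.lt_or_ge (i : ℕ) L with h | h
      · have hi : i = Fin.castLEEmb hLn ⟨(i : ℕ), h⟩ := by
          ext; simp
        rw [hi, Finsupp.embDomain_apply_self]
        show β (Fin.castLE hLn ⟨(i : ℕ), h⟩) = _
        congr 1
      · rw [Finsupp.embDomain_notin_range, hβ2 i h]
        rintro ⟨j, rfl⟩
        have := j.2
        rw [Fin.castLEEmb_apply, Fin.coe_castLE] at h
        omega
    · rintro ⟨P, hP⟩
      ext i
      simp only [Finsupp.comapDomain_apply]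
      have hcast : Fin.castLE hLn i = Fin.castLEEmb hLn i := rfl
      show (Finsupp.embDomain (Fin.castLEEmb hLn) P) (Fin.castLE hLn i) = P i
      rw [hcast, Finsupp.embDomain_apply_self]
  rw [Nat.card_congr (e1.trans (Sym.equivNatSum (Fin L) c).symm), Nat.card_eq_fintype_card,
    Sym.card_sym_eq_multichoose, Nat.multichoose_eq, Fintype.card_fin]
  have h1 : L + c - 1 = c + L - 1 := by omega
  rw [h1]
  have h2 : (c + L - 1) - c = L - 1 := by omega
  rw [← h2, Nat.choose_symm (by omega)]

end Aux
/-- A special ideal `I = ∏ j (x_1^{p j}, …, x_{ℓ j}^{p j})^{a j}` is generated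
by the monomials `X^γ` for `γ ∈ T`, where `T` is the set of sums
`∑ j, p j • β j` with `β j` of total degree `a j` supported on the first `ℓ j`
coordinates; every such monomial has total degree `∑ j, a j * p j`; there are
exactly `∏ j, C(a j + ℓ j - 1, ℓ j - 1)` of them; and none of them lies in the
ideal generated by the others. -/
theorem special_ideal_structure (K : Type*) [Field K] (n : ℕ) (hn : 1 ≤ n)
    (s : ℕ) (hs : 1 ≤ s) (p a ℓ : ℕ → ℕ)
    (hp : ∀ j, 1 ≤ j → j ≤ s → 0 < p j)
    (hsum : ∀ j, 2 ≤ j → j ≤ s → ∑ m ∈ Finset.Icc 1 (j - 1), a m * p m < p j)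
    (hℓ1 : ℓ 1 = n)
    (hℓmono : ∀ j, 1 ≤ j → j ≤ s - 1 → ℓ (j + 1) ≤ ℓ j)
    (hℓs : 1 ≤ ℓ s)
    (T : Set (Fin n →₀ ℕ))
    (hT : T = {γ : Fin n →₀ ℕ | ∃ β : ℕ → (Fin n →₀ ℕ),
      (∀ j, 1 ≤ j → j ≤ s →
        (∑ i, β j i = a j) ∧ ∀ i : Fin n, ℓ j ≤ (i : ℕ) → β j i = 0) ∧
      γ = ∑ j ∈ Finset.Icc 1 s, p j • β j})
    (M : Set (MvPolynomial (Fin n) K))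
    (hM : M = {m : MvPolynomial (Fin n) K | ∃ γ ∈ T, m = monomial γ (1 : K)}) :
    (∏ j ∈ Finset.Icc 1 s,
        (Ideal.span {f : MvPolynomial (Fin n) K |
          ∃ i : Fin n, (i : ℕ) < ℓ j ∧ f = X i ^ p j}) ^ a j
      = Ideal.span M) ∧
    (∀ m ∈ M, m.totalDegree = ∑ j ∈ Finset.Icc 1 s, a j * p j) ∧
    M.ncard = ∏ j ∈ Finset.Icc 1 s, Nat.choose (a j + ℓ j - 1) (ℓ j - 1) ∧
    ∀ m ∈ M, m ∉ Ideal.span (M \ {m}) := by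
  classical
  -- bounds on ℓ
  have hmono : ∀ d j, 1 ≤ j → j + d ≤ s → ℓ (j + d) ≤ ℓ j := by
    intro d
    induction d with
    | zero => intro j _ _; simp
    | succ d ihd =>
      intro j hj1 hj2
      have h1 : ℓ (j + d + 1) ≤ ℓ (j + d) := hℓmono (j + d) (by omega) (by omega)
      have h2 : ℓ (j + d) ≤ ℓ j := ihd j hj1 (by omega)
      calc ℓ (j + (d + 1)) = ℓ (j + d + 1) := by ring_nf
        _ ≤ ℓ j := le_trans h1 h2
  have hℓbound : ∀ j, 1 ≤ j → j ≤ s → 1 ≤ ℓ j ∧ ℓ j ≤ n := by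
    intro j hj1 hj2
    constructor
    · have := hmono (s - j) j hj1 (by omega)
      rw [show j + (s - j) = s by omega] at this
      omega
    · have := hmono (j - 1) 1 le_rfl (by omega)
      rw [show 1 + (j - 1) = j by omega, hℓ1] at this
      omega
  -- uniqueness of decompositions
  have huniq : ∀ β β' : ℕ → (Fin n →₀ ℕ),
      (∀ j, 1 ≤ j → j ≤ s → ∑ i, β j i = a j) →
      (∀ j, 1 ≤ j → j ≤ s → ∑ i, β' j i = a j) →
      (∑ j ∈ Finset.Icc 1 s, p j • β j) = (∑ j ∈ Finset.Icc 1 s, p j • β' j) →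
      ∀ j, 1 ≤ j → j ≤ s → β j = β' j := by
    intro β β' hβ hβ' hEq j hj1 hj2
    ext i
    have happ : ∀ (δ : ℕ → (Fin n →₀ ℕ)),
        (∑ j ∈ Finset.Icc 1 s, p j • δ j) i = ∑ j ∈ Finset.Icc 1 s, p j * δ j i := by
      intro δ
      rw [Finset.sum_apply']
      exact Finset.sum_congr rfl fun j _ => by
        rw [Finsupp.smul_apply, smul_eq_mul]
    have hEqi : ∑ j ∈ Finset.Icc 1 s, p j * β j i = ∑ j ∈ Finset.Icc 1 s, p j * β' j i := by
      rw [← happ β, ← happ β', hEq]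
    refine nat_uniq' s p a (fun j => β j i) (fun j => β' j i) hp hsum ?_ hEqi j hj1 hj2
    intro m hm1 hm2
    constructor
    · rw [← hβ m hm1 hm2]
      exact Finset.single_le_sum (fun i' _ => Nat.zero_le _) (Finset.mem_univ i)
    · rw [← hβ' m hm1 hm2]
      exact Finset.single_le_sum (fun i' _ => Nat.zero_le _) (Finset.mem_univ i)
  -- total degree of elements of T
  have hdeg : ∀ γ ∈ T, ∑ i, γ i = ∑ j ∈ Finset.Icc 1 s, a j * p j := by
    intro γ hγ
    rw [hT] at hγ
    obtain ⟨β, hβ, rfl⟩ := hγ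
    rw [Finset.sum_congr rfl fun i _ => Finset.sum_apply' i, Finset.sum_comm]
    refine Finset.sum_congr rfl fun j hj => ?_
    rw [Finset.mem_Icc] at hj
    have : ∀ i : Fin n, (p j • β j) i = p j * β j i := fun i => by
      rw [Finsupp.smul_apply, smul_eq_mul]
    rw [Finset.sum_congr rfl fun i _ => this i, ← Finset.mul_sum, (hβ j hj.1 hj.2).1, mul_comm]
  -- M as an image
  have hMimg : M = (fun γ => monomial γ (1 : K)) '' T := by
    rw [hM]
    ext m
    simp only [Set.mem_setOf_eq, Set.mem_image]
    constructor
    · rintro ⟨γ, hγ, rfl⟩; exact ⟨γ, hγ, rfl⟩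
    · rintro ⟨γ, hγ, rfl⟩; exact ⟨γ, hγ, rfl⟩
  have hinj : Function.Injective (fun γ : Fin n →₀ ℕ => monomial γ (1 : K)) :=
    monomial_left_injective one_ne_zero
  refine ⟨?_, ?_, ?_, ?_⟩
  · -- Part A: the product of ideals is the span of M
    have h1 : ∀ j ∈ Finset.Icc 1 s,
        (Ideal.span {f : MvPolynomial (Fin n) K |
          ∃ i : Fin n, (i : ℕ) < ℓ j ∧ f = X i ^ p j}) ^ a j
        = Ideal.span ({f : MvPolynomial (Fin n) K |
          ∃ i : Fin n, (i : ℕ) < ℓ j ∧ f = X i ^ p j} ^ a j) :=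
      fun j _ => Submodule.span_pow _ (a j)
    rw [Finset.prod_congr rfl h1, span_finset_prod']
    congr 1
    ext m
    rw [Set.mem_finset_prod]
    constructor
    · rintro ⟨g, hg, rfl⟩
      have hch : ∀ j, ∃ β : Fin n →₀ ℕ, j ∈ Finset.Icc 1 s →
          (∑ i, β i = a j) ∧ (∀ i : Fin n, ℓ j ≤ (i : ℕ) → β i = 0) ∧
          g j = monomial (p j • β) (1 : K) := by
        intro j
        by_cases h : j ∈ Finset.Icc 1 s
        · obtain ⟨β, h1', h2', h3'⟩ := (mem_pow_char' (ℓ j) (p j) (g j) (a j)).mp (hg h)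
          exact ⟨β, fun _ => ⟨h1', h2', h3'⟩⟩
        · exact ⟨0, fun hc => absurd hc h⟩
      choose B hB using hch
      have hprod : ∏ j ∈ Finset.Icc 1 s, g j
          = monomial (∑ j ∈ Finset.Icc 1 s, p j • B j) (1 : K) := by
        rw [Finset.prod_congr rfl fun j hj => (hB j hj).2.2, prod_monomial_one']
      rw [hM, hprod]
      refine ⟨_, ?_, rfl⟩
      rw [hT]
      exact ⟨B, fun j hj1 hj2 =>
        ⟨(hB j (Finset.mem_Icc.mpr ⟨hj1, hj2⟩)).1,
         (hB j (Finset.mem_Icc.mpr ⟨hj1, hj2⟩)).2.1⟩, rfl⟩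
    · intro hm
      rw [hM] at hm
      obtain ⟨γ, hγ, rfl⟩ := hm
      rw [hT] at hγ
      obtain ⟨β, hβ, rfl⟩ := hγ
      refine ⟨fun j => monomial (p j • β j) (1 : K), ?_, ?_⟩
      · intro j hj
        rw [Finset.mem_Icc] at hj
        exact (mem_pow_char' (ℓ j) (p j) _ (a j)).mpr
          ⟨β j, (hβ j hj.1 hj.2).1, (hβ j hj.1 hj.2).2, rfl⟩
      · rw [prod_monomial_one']
  · -- Part B: total degrees
    intro m hm
    rw [hMimg] at hm
    obtain ⟨γ, hγ, rfl⟩ := hm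
    rw [totalDegree_monomial _ (one_ne_zero (α := K)),
      Finsupp.sum_fintype _ _ (fun _ => rfl)]
    exact hdeg γ hγ
  · -- Part C: cardinality
    rw [hMimg, Set.ncard_image_of_injective T hinj, ← Nat.card_coe_set_eq]
    set E := fun j : ℕ => {β : Fin n →₀ ℕ //
      (∑ i, β i = a j) ∧ ∀ i : Fin n, ℓ j ≤ (i : ℕ) → β i = 0} with hE
    have hmemT : ∀ g : (∀ j : (Finset.Icc 1 s : Finset ℕ), E j),
        (∑ j ∈ (Finset.Icc 1 s).attach, p (j : ℕ) • ((g j).1 : Fin n →₀ ℕ)) ∈ T := by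
      intro g
      rw [hT]
      refine ⟨fun j => if h : j ∈ Finset.Icc 1 s then (g ⟨j, h⟩).1 else 0, ?_, ?_⟩
      · intro j hj1 hj2
        have h : j ∈ Finset.Icc 1 s := Finset.mem_Icc.mpr ⟨hj1, hj2⟩
        simp only [dif_pos h]
        exact (g ⟨j, h⟩).2
      · rw [← Finset.sum_attach (Finset.Icc 1 s)
          (fun j => p j • (if h : j ∈ Finset.Icc 1 s then ((g ⟨j, h⟩).1 : Fin n →₀ ℕ) else 0))]
        refine Finset.sum_congr rfl fun j _ => ?_
        rw [dif_pos j.2]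
    set Φ : (∀ j : (Finset.Icc 1 s : Finset ℕ), E j) → T := fun g => ⟨_, hmemT g⟩ with hΦ
    have hbij : Function.Bijective Φ := by
      constructor
      · intro g g' hgg
        have hsums : (∑ j ∈ Finset.Icc 1 s, p j •
              (if h : j ∈ Finset.Icc 1 s then ((g ⟨j, h⟩).1 : Fin n →₀ ℕ) else 0))
            = ∑ j ∈ Finset.Icc 1 s, p j •
              (if h : j ∈ Finset.Icc 1 s then ((g' ⟨j, h⟩).1 : Fin n →₀ ℕ) else 0) := by
          rw [← Finset.sum_attach (Finset.Icc 1 s)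
            (fun j => p j • (if h : j ∈ Finset.Icc 1 s then ((g ⟨j, h⟩).1 : Fin n →₀ ℕ) else 0)),
            ← Finset.sum_attach (Finset.Icc 1 s)
            (fun j => p j • (if h : j ∈ Finset.Icc 1 s then ((g' ⟨j, h⟩).1 : Fin n →₀ ℕ) else 0))]
          have := congrArg Subtype.val hgg
          simp only [hΦ] at this
          calc ∑ j ∈ (Finset.Icc 1 s).attach, p (j : ℕ) •
                (if h : (j : ℕ) ∈ Finset.Icc 1 s then ((g ⟨(j : ℕ), h⟩).1 : Fin n →₀ ℕ) else 0)
              = ∑ j ∈ (Finset.Icc 1 s).attach, p (j : ℕ) • ((g j).1 : Fin n →₀ ℕ) :=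
                Finset.sum_congr rfl fun j _ => by rw [dif_pos j.2]
            _ = ∑ j ∈ (Finset.Icc 1 s).attach, p (j : ℕ) • ((g' j).1 : Fin n →₀ ℕ) := this
            _ = ∑ j ∈ (Finset.Icc 1 s).attach, p (j : ℕ) •
                (if h : (j : ℕ) ∈ Finset.Icc 1 s then ((g' ⟨(j : ℕ), h⟩).1 : Fin n →₀ ℕ) else 0) :=
                Finset.sum_congr rfl fun j _ => by rw [dif_pos j.2]
        have huq := huniq _ _
          (fun j hj1 hj2 => by
            simp only [dif_pos (Finset.mem_Icc.mpr ⟨hj1, hj2⟩)]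
            exact (g ⟨j, Finset.mem_Icc.mpr ⟨hj1, hj2⟩⟩).2.1)
          (fun j hj1 hj2 => by
            simp only [dif_pos (Finset.mem_Icc.mpr ⟨hj1, hj2⟩)]
            exact (g' ⟨j, Finset.mem_Icc.mpr ⟨hj1, hj2⟩⟩).2.1)
          hsums
        funext j
        have hj := Finset.mem_Icc.mp j.2
        have := huq (j : ℕ) hj.1 hj.2
        simp only [dif_pos j.2] at this
        exact Subtype.ext this
      · rintro ⟨γ, hγ⟩
        rw [hT] at hγ
        obtain ⟨β, hβ, hγeq⟩ := hγ
        refine ⟨fun j => ⟨β (j : ℕ),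
          (hβ (j : ℕ) (Finset.mem_Icc.mp j.2).1 (Finset.mem_Icc.mp j.2).2).1,
          (hβ (j : ℕ) (Finset.mem_Icc.mp j.2).1 (Finset.mem_Icc.mp j.2).2).2⟩, ?_⟩
        apply Subtype.ext
        show (∑ j ∈ (Finset.Icc 1 s).attach, p (j : ℕ) • β (j : ℕ)) = γ
        rw [hγeq, ← Finset.sum_attach (Finset.Icc 1 s) (fun j => p j • β j)]
    rw [← Nat.card_congr (Equiv.ofBijective Φ hbij), Nat.card_pi,
      Finset.prod_coe_sort (Finset.Icc 1 s) (fun j => Nat.card (E j))]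
    refine Finset.prod_congr rfl fun j hj => ?_
    rw [Finset.mem_Icc] at hj
    exact card_E' n (ℓ j) (a j) (hℓbound j hj.1 hj.2).1 (hℓbound j hj.1 hj.2).2
  · -- Part D: minimality
    intro m hm hcon
    rw [hMimg] at hm
    obtain ⟨γ, hγ, rfl⟩ := hm
    have himg : M \ {monomial γ (1 : K)} = (fun γ' => monomial γ' (1 : K)) '' (T \ {γ}) := by
      rw [hMimg, show ({monomial γ (1 : K)} : Set (MvPolynomial (Fin n) K))
          = (fun γ' => monomial γ' (1 : K)) '' {γ} from (Set.image_singleton (f := fun γ' => monomial γ' (1 : K)) (a := γ)).symm]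
      exact (Set.image_diff hinj T {γ}).symm
    rw [himg] at hcon
    obtain ⟨γ', hγ', hle⟩ := MvPolynomial.mem_ideal_span_monomial_image.mp hcon γ
      (by rw [support_monomial, if_neg (one_ne_zero (α := K))]; exact Finset.mem_singleton_self γ)
    have hle' : ∀ i, γ' i ≤ γ i := fun i => Finsupp.le_def.mp hle i
    have hs1 : ∑ i, γ' i = ∑ i, γ i := by rw [hdeg γ' hγ'.1, hdeg γ hγ]
    have heq : γ' = γ := by
      ext i
      exact (Finset.sum_eq_sum_iff_of_le (fun i _ => hle' i)).mp hs1 i (Finset.mem_univ i)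
    exact hγ'.2 heq
end

section
/- Let R be a commutative ring and let I and J be ideals of R. Suppose there are R-linear maps φ : R^s → R^t and ψ : R^t → R with image of ψ equal to I, such that the sequence R^s → R^t → I → 0 is exact (i.e. ker ψ = im φ) and the image of φ is contained in the submodule J·R^t of R^t. Then the R-module I/(I·J) is isomorphic to (R/J)^t. -/
/-- If an ideal `I` has a presentation `R^s → R^t → I → 0` whose relation
matrix has all entries in the ideal `J`, then `I / (I*J)` is isomorphic to
`(R/J)^t` as an `R`-module. -/
theorem conjoined_presentation_quotient (R : Type*) [CommRing R]
    (I J : Ideal R) (s t : ℕ)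
    (φ : (Fin s → R) →ₗ[R] (Fin t → R)) (ψ : (Fin t → R) →ₗ[R] R)
    (hψ : LinearMap.range ψ = I)
    (hexact : LinearMap.ker ψ = LinearMap.range φ)
    (hφJ : ∀ x ∈ LinearMap.range φ, ∀ i, x i ∈ J) :
    Nonempty ((↥I ⧸ (Submodule.comap I.subtype (I * J))) ≃ₗ[R] (Fin t → R ⧸ J)) := by
  classical
  set P : Submodule R (Fin t → R) := Submodule.pi Set.univ (fun _ => J) with hP
  have hψI : ∀ x, ψ x ∈ I := fun x => hψ ▸ LinearMap.mem_range_self ψ x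
  set ψ' : (Fin t → R) →ₗ[R] I := LinearMap.codRestrict (I : Submodule R R) ψ hψI with hψ'
  set f : (Fin t → R) →ₗ[R] (↥I ⧸ (Submodule.comap I.subtype (I * J))) :=
    (Submodule.mkQ _) ∘ₗ ψ' with hf
  have hsurj : Function.Surjective f := by
    intro y
    obtain ⟨z, rfl⟩ := Submodule.Quotient.mk_surjective _ y
    have : (z : R) ∈ LinearMap.range ψ := hψ ▸ z.2
    obtain ⟨x, hx⟩ := this
    refine ⟨x, ?_⟩
    simp only [hf, LinearMap.comp_apply, Submodule.mkQ_apply]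
    congr 1
    exact Subtype.ext hx
  have hker : LinearMap.ker f = P := by
    ext x
    have hmem : x ∈ LinearMap.ker f ↔ ψ x ∈ I * J := by
      simp only [hf, LinearMap.mem_ker, LinearMap.comp_apply, Submodule.mkQ_apply,
        Submodule.Quotient.mk_eq_zero, Submodule.mem_comap]
      rfl
    rw [hmem]
    constructor
    · intro hx
      -- find y ∈ P with ψ y = ψ x
      have key : ∀ r ∈ I * J, ∃ y ∈ P, ψ y = r := by
        intro r hr
        refine Submodule.mul_induction_on hr ?_ ?_
        · intro a ha b hb
          have ha' : a ∈ LinearMap.range ψ := hψ ▸ ha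
          obtain ⟨z, hz⟩ := ha'
          refine ⟨b • z, ?_, ?_⟩
          · intro i _
            exact J.mul_mem_right (z i) hb
          · rw [map_smul, hz, smul_eq_mul, mul_comm]
        · rintro r₁ r₂ ⟨y₁, hy₁, hy₁'⟩ ⟨y₂, hy₂, hy₂'⟩
          exact ⟨y₁ + y₂, P.add_mem hy₁ hy₂, by rw [map_add, hy₁', hy₂']⟩
      obtain ⟨y, hyP, hyx⟩ := key _ hx
      have hxy : x - y ∈ LinearMap.range φ := by
        rw [← hexact, LinearMap.mem_ker, map_sub, hyx, sub_self]
      have : x - y ∈ P := fun i _ => hφJ _ hxy i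
      have hx' : x = (x - y) + y := by ring
      rw [hx']
      exact P.add_mem this hyP
    · intro hx
      have hxr : x = ∑ i, x i • (Pi.single i 1 : Fin t → R) := by
        funext j
        simp [Pi.single_apply, mul_comm]
      have : ψ x = ∑ i, x i * ψ (Pi.single i 1) := by
        conv_lhs => rw [hxr]
        simp [Finset.sum_apply, smul_eq_mul]
      rw [this]
      refine Submodule.sum_mem _ fun i _ => ?_
      rw [mul_comm (x i)]
      exact Ideal.mul_mem_mul (hψI _) (hx i (Set.mem_univ i))
  refine ⟨?_⟩
  exact ((Submodule.quotEquivOfEq _ _ hker).symm.trans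
      (f.quotKerEquivOfSurjective hsurj)).symm.trans (Submodule.quotientPi _)
end

section
/- Let n ≥ 2 and let s and t be real numbers with 0 < s < t. Let u : Fin n → ℝ be the vector with u 0 = s, u 1 = t, and u i = 0 for i ≥ 2, and let P ⊆ (Fin n → ℝ) be the set of all vectors obtained from u by permuting coordinates, i.e. P = { u ∘ σ⁻¹ : σ a permutation of Fin n }. Then the convex hull of P equals { v : Fin n → ℝ | Σ_{i} v i = s + t and 0 ≤ v i ≤ t for every i }. -/
open Finset Matrix

/-- Inequality description of the generalized permutohedron `Π(u)` for
`u = (s, t, 0, …, 0)` with `0 < s < t`: the convex hull of the coordinate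
permutations of `u` is `{v | ∑ i, v i = s + t and 0 ≤ v i ≤ t for all i}`. -/
theorem generalized_permutohedron_ineq_description (n : ℕ) (hn : 2 ≤ n)
    (s t : ℝ) (hs : 0 < s) (hst : s < t) (u : Fin n → ℝ)
    (hu0 : u ⟨0, by omega⟩ = s) (hu1 : u ⟨1, by omega⟩ = t)
    (hurest : ∀ i : Fin n, 2 ≤ (i : ℕ) → u i = 0) :
    convexHull ℝ {v : Fin n → ℝ | ∃ σ : Equiv.Perm (Fin n), v = u ∘ ⇑σ⁻¹}
      = {v : Fin n → ℝ | (∑ i, v i) = s + t ∧ ∀ i, 0 ≤ v i ∧ v i ≤ t} := by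
  have ht : 0 < t := hs.trans hst
  have hts : 0 < t - s := by linarith
  set i0 : Fin n := ⟨0, by omega⟩ with hi0
  set i1 : Fin n := ⟨1, by omega⟩ with hi1
  have h01 : i0 ≠ i1 := by simp [hi0, hi1, Fin.ext_iff]
  have hnotin : ∀ i : Fin n, i ∉ ({i0, i1} : Finset (Fin n)) → 2 ≤ (i : ℕ) := by
    intro i hi
    simp only [Finset.mem_insert, Finset.mem_singleton, hi0, hi1, Fin.ext_iff] at hi
    push_neg at hi
    omega
  have hsumu : ∑ i, u i = s + t := by
    rw [← Finset.sum_subset (Finset.subset_univ ({i0, i1} : Finset (Fin n)))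
      (fun i _ hi => hurest i (hnotin i hi))]
    rw [Finset.sum_pair h01, hu0, hu1]
  have hub : ∀ i : Fin n, 0 ≤ u i ∧ u i ≤ t := by
    intro i
    by_cases hmem : i ∈ ({i0, i1} : Finset (Fin n))
    · simp only [Finset.mem_insert, Finset.mem_singleton] at hmem
      rcases hmem with rfl | rfl
      · rw [hu0]; constructor <;> linarith
      · rw [hu1]; constructor <;> linarith
    · rw [hurest i (hnotin i hmem)]; constructor <;> linarith
  apply le_antisymm
  · -- forward inclusion
    apply convexHull_min
    · rintro v ⟨σ, rfl⟩
      refine ⟨?_, fun i => hub _⟩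
      rw [show (∑ i, (u ∘ ⇑σ⁻¹) i) = ∑ i, u (σ⁻¹ i) from rfl,
        Equiv.sum_comp σ⁻¹ u, hsumu]
    · rintro x ⟨hx1, hx2⟩ y ⟨hy1, hy2⟩ c d hc hd hcd
      refine ⟨?_, fun i => ⟨?_, ?_⟩⟩
      · simp only [Pi.add_apply, Pi.smul_apply, smul_eq_mul]
        rw [Finset.sum_add_distrib, ← Finset.mul_sum, ← Finset.mul_sum, hx1, hy1]
        nlinarith
      · have := (hx2 i).1; have := (hy2 i).1
        simp only [Pi.add_apply, Pi.smul_apply, smul_eq_mul]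
        nlinarith
      · have := (hx2 i).2; have := (hy2 i).2
        simp only [Pi.add_apply, Pi.smul_apply, smul_eq_mul]
        nlinarith
  · -- reverse inclusion
    rintro v ⟨hvsum, hvb⟩
    set m : Fin n → ℝ := fun i => min (v i / s) ((t - v i) / (t - s)) with hm
    have hm0 : ∀ i, 0 ≤ m i := fun i =>
      le_min (div_nonneg (hvb i).1 hs.le) (div_nonneg (by linarith [(hvb i).2]) hts.le)
    set S : ℝ := ∑ i, m i with hSdef
    have hmlow : ∀ i : Fin n, v i ≤ s → m i = v i / s := by
      intro i hvi
      apply min_eq_left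
      rw [div_le_div_iff₀ hs hts]
      nlinarith [(hvb i).1]
    have hmhigh : ∀ i : Fin n, s ≤ v i → m i = (t - v i) / (t - s) := by
      intro i hvi
      apply min_eq_right
      rw [div_le_div_iff₀ hts hs]
      nlinarith [(hvb i).2]
    have hS1 : 1 ≤ S := by
      classical
      set B : Finset (Fin n) := Finset.univ.filter (fun i => s < v i) with hB
      rcases Nat.lt_or_ge B.card 2 with hk | hk
      · interval_cases hc : B.card
        · -- B empty: all v i ≤ s
          have hall : ∀ i, v i ≤ s := by
            intro i
            by_contra h
            push_neg at h
            have : i ∈ B := by simp [hB, h]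
            simp [Finset.card_eq_zero.mp hc] at this
          have : S = (∑ i, v i) / s := by
            rw [hSdef, Finset.sum_div]
            exact Finset.sum_congr rfl fun i _ => hmlow i (hall i)
          rw [this, hvsum, one_le_div hs]
          linarith
        · -- B = {j}
          obtain ⟨j, hj⟩ := Finset.card_eq_one.mp hc
          have hsub : ∑ i ∈ Finset.univ.erase j, m i ≤ S :=
            Finset.sum_le_sum_of_subset_of_nonneg (Finset.subset_univ _)
              (fun i _ _ => hm0 i)
          have heq : ∑ i ∈ Finset.univ.erase j, m i
              = (∑ i ∈ Finset.univ.erase j, v i) / s := by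
            rw [Finset.sum_div]
            refine Finset.sum_congr rfl fun i hi => hmlow i ?_
            by_contra h
            push_neg at h
            have : i ∈ B := by simp [hB, h]
            rw [hj, Finset.mem_singleton] at this
            exact (Finset.mem_erase.mp hi).1 this
          have hve : ∑ i ∈ Finset.univ.erase j, v i = (s + t) - v j := by
            rw [Finset.sum_erase_eq_sub (Finset.mem_univ j), hvsum]
          refine le_trans ?_ hsub
          rw [heq, hve, le_div_iff₀ hs]
          linarith [(hvb j).2]
      · -- |B| ≥ 2
        have hsub : ∑ i ∈ B, m i ≤ S :=
          Finset.sum_le_sum_of_subset_of_nonneg (Finset.subset_univ _)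
            (fun i _ _ => hm0 i)
        have heq : ∑ i ∈ B, m i = ((B.card : ℝ) * t - ∑ i ∈ B, v i) / (t - s) := by
          have : ∀ i ∈ B, m i = (t - v i) / (t - s) := by
            intro i hi
            refine hmhigh i ?_
            simp only [hB, Finset.mem_filter] at hi
            linarith [hi.2]
          rw [Finset.sum_congr rfl this, ← Finset.sum_div, Finset.sum_sub_distrib,
            Finset.sum_const, nsmul_eq_mul]
        have hvB : ∑ i ∈ B, v i ≤ s + t := by
          rw [← hvsum]
          exact Finset.sum_le_sum_of_subset_of_nonneg (Finset.subset_univ _)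
            (fun i _ _ => (hvb i).1)
        have hk2 : (2 : ℝ) ≤ (B.card : ℝ) := by exact_mod_cast hk
        refine le_trans ?_ hsub
        rw [heq, le_div_iff₀ hts]
        nlinarith
    have hSpos : 0 < S := lt_of_lt_of_le one_pos hS1
    set a : Fin n → ℝ := fun i => m i / S with ha
    have ha0 : ∀ i, 0 ≤ a i := fun i => div_nonneg (hm0 i) hSpos.le
    have ham : ∀ i, a i ≤ m i := fun i => div_le_self (hm0 i) hS1
    have haS : ∑ i, a i = 1 := by
      rw [ha, ← Finset.sum_div, ← hSdef, div_self hSpos.ne']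
    set b : Fin n → ℝ := fun i => (v i - s * a i) / t with hb
    have hsa : ∀ i, s * a i ≤ v i := by
      intro i
      have h1 : a i ≤ v i / s := le_trans (ham i) (min_le_left _ _)
      rw [← le_div_iff₀' hs]
      exact h1
    have hb0 : ∀ i, 0 ≤ b i := fun i => div_nonneg (by linarith [hsa i]) ht.le
    have hab1 : ∀ i, a i + b i ≤ 1 := by
      intro i
      have h1 : a i ≤ (t - v i) / (t - s) := le_trans (ham i) (min_le_right _ _)
      rw [le_div_iff₀ hts] at h1
      have h2 : b i ≤ 1 - a i := by
        show (v i - s * a i) / t ≤ 1 - a i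
        rw [div_le_iff₀ ht]
        nlinarith
      linarith
    have hbS : ∑ i, b i = 1 := by
      show ∑ i, (v i - s * a i) / t = 1
      rw [← Finset.sum_div, Finset.sum_sub_distrib, ← Finset.mul_sum, haS, hvsum]
      field_simp
      ring
    have hv_ab : ∀ i, v i = s * a i + t * b i := by
      intro i
      show v i = s * a i + t * ((v i - s * a i) / t)
      field_simp
      ring
    -- the doubly stochastic matrix
    set M : Matrix (Fin n) (Fin n) ℝ :=
      fun i j => if j = i0 then a i else if j = i1 then b i else
        (1 - a i - b i) / ((n : ℝ) - 2) with hMdef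
    have hn2 : (0:ℝ) ≤ (n : ℝ) - 2 := by
      have : (2:ℝ) ≤ (n:ℝ) := by exact_mod_cast hn
      linarith
    have hrowsplit : ∀ f : Fin n → ℝ,
        ∑ j, f j = f i0 + f i1 + ∑ j ∈ Finset.univ \ {i0, i1}, f j := by
      intro f
      rw [← Finset.sum_sdiff (Finset.subset_univ ({i0, i1} : Finset (Fin n))),
        Finset.sum_pair h01]
      ring
    have hcardrest : (Finset.univ \ ({i0, i1} : Finset (Fin n))).card = n - 2 := by
      rw [Finset.card_sdiff_of_subset (Finset.subset_univ _), Finset.card_pair h01,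
        Finset.card_univ, Fintype.card_fin]
    have habeq : 2 < n ∨ ∀ i, a i + b i = 1 := by
      rcases Nat.lt_or_ge 2 n with h | h
      · exact Or.inl h
      · right
        have hn2' : n = 2 := le_antisymm h hn
        intro i
        by_contra hne
        have hlt : a i + b i < 1 := lt_of_le_of_ne (hab1 i) hne
        have : ∑ j, (a j + b j) < ∑ j : Fin n, (1:ℝ) := by
          refine Finset.sum_lt_sum (fun j _ => hab1 j) ⟨i, Finset.mem_univ i, hlt⟩
        rw [Finset.sum_add_distrib, haS, hbS, Finset.sum_const, Finset.card_univ,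
          Fintype.card_fin, nsmul_eq_mul] at this
        rw [hn2'] at this
        norm_num at this
    have hMds : M ∈ doublyStochastic ℝ (Fin n) := by
      rw [mem_doublyStochastic_iff_sum]
      refine ⟨?_, ?_, ?_⟩
      · intro i j
        rw [hMdef]
        dsimp only
        split
        · exact ha0 i
        · split
          · exact hb0 i
          · exact div_nonneg (by linarith [hab1 i]) hn2
      · intro i
        rw [hrowsplit (fun j => M i j)]
        have h0 : M i i0 = a i := by rw [hMdef]; simp
        have h1 : M i i1 = b i := by rw [hMdef]; simp [h01.symm]
        have hrest : ∑ j ∈ Finset.univ \ ({i0, i1} : Finset (Fin n)), M i j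
            = ((n : ℝ) - 2) * ((1 - a i - b i) / ((n : ℝ) - 2)) := by
          have hterm : ∀ j ∈ Finset.univ \ ({i0, i1} : Finset (Fin n)),
              M i j = (1 - a i - b i) / ((n : ℝ) - 2) := by
            intro j hj
            simp only [Finset.mem_sdiff, Finset.mem_insert, Finset.mem_singleton] at hj
            push_neg at hj
            rw [hMdef]
            simp [hj.2.1, hj.2.2]
          rw [Finset.sum_congr rfl hterm, Finset.sum_const, hcardrest, nsmul_eq_mul]
          congr 1
          rw [Nat.cast_sub hn]
          norm_num
        rw [h0, h1, hrest]
        rcases habeq with hlt | hall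
        · have hne : ((n:ℝ) - 2) ≠ 0 := by
            have : (2:ℝ) < (n:ℝ) := by exact_mod_cast hlt
            linarith
          rw [mul_comm, div_mul_cancel₀ _ hne]
          ring
        · have h0 : 1 - a i - b i = 0 := by linarith [hall i]
          rw [h0]
          simpa using hall i
      · intro j
        by_cases hj0 : j = i0
        · have h : ∀ i, M i j = a i := fun i => by rw [hMdef]; simp [hj0]
          rw [Finset.sum_congr rfl fun i _ => h i, haS]
        · by_cases hj1 : j = i1
          · have h : ∀ i, M i j = b i := fun i => by
              rw [hMdef]; simp [hj1, Ne.symm h01]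
            rw [Finset.sum_congr rfl fun i _ => h i, hbS]
          · have hnn : 2 < n := by
              have h2 : 2 ≤ (j : ℕ) := by
                refine hnotin j ?_
                simp [hj0, hj1]
              have := j.2
              omega
            have hne : ((n:ℝ) - 2) ≠ 0 := by
              have : (2:ℝ) < (n:ℝ) := by exact_mod_cast hnn
              linarith
            have h : ∀ i, M i j = (1 - a i - b i) / ((n : ℝ) - 2) := fun i => by
              rw [hMdef]; simp [hj0, hj1]
            rw [Finset.sum_congr rfl fun i _ => h i, ← Finset.sum_div,
              Finset.sum_sub_distrib, Finset.sum_sub_distrib, haS, hbS,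
              Finset.sum_const, Finset.card_univ, Fintype.card_fin, nsmul_eq_mul]
            rw [div_eq_one_iff_eq hne]
            ring
    have hMu : M *ᵥ u = v := by
      funext i
      show ∑ j, M i j * u j = v i
      rw [← Finset.sum_subset (Finset.subset_univ ({i0, i1} : Finset (Fin n)))
        (fun j _ hj => by rw [hurest j (hnotin j hj), mul_zero])]
      rw [Finset.sum_pair h01, hu0, hu1]
      have h0 : M i i0 = a i := by rw [hMdef]; simp
      have h1 : M i i1 = b i := by rw [hMdef]; simp [h01.symm]
      rw [h0, h1, hv_ab i]
      ring
    obtain ⟨w, hw0, hw1, hwM⟩ := exists_eq_sum_perm_of_mem_doublyStochastic hMds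
    have hperm : ∀ σ : Equiv.Perm (Fin n), (σ.permMatrix ℝ) *ᵥ u = u ∘ ⇑σ := by
      intro σ
      funext i
      show ∑ j, σ.permMatrix ℝ i j * u j = u (σ i)
      simp [Equiv.Perm.permMatrix, PEquiv.toMatrix_apply, Equiv.toPEquiv_apply,
        ite_mul, Finset.sum_ite_eq]
    have hlin : ∀ F : Finset (Equiv.Perm (Fin n)),
        (∑ σ ∈ F, w σ • σ.permMatrix ℝ) *ᵥ u = ∑ σ ∈ F, w σ • (σ.permMatrix ℝ *ᵥ u) := by
      intro F
      induction F using Finset.induction with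
      | empty => simp [Matrix.zero_mulVec]
      | insert _ _ h ih =>
        rw [Finset.sum_insert h, Finset.sum_insert h, Matrix.add_mulVec,
          smul_mulVec, ih]
    have hvrep : ∑ σ : Equiv.Perm (Fin n), w σ • (u ∘ ⇑σ) = v := by
      have h2 := congrArg (fun N : Matrix (Fin n) (Fin n) ℝ => N *ᵥ u) hwM
      rw [hlin, hMu] at h2
      rw [← h2]
      exact Finset.sum_congr rfl fun σ _ => by rw [hperm σ]
    exact mem_convexHull_of_exists_fintype w (fun σ => u ∘ ⇑σ) hw0 hw1
      (fun σ => ⟨σ⁻¹, by simp⟩) hvrep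
end
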